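/- Let H be a real Hilbert space and let A, B, C be maximally monotone operators on H with resolvents J_{γA}, J_{γB} for γ > 0. Define T = I − J_{γB} + J_{γA} ∘ (2J_{γB} − I − γ C ∘ J_{γB}). If z* is a fixed point of T, then x* = J_{γB}(z*) satisfies 0 ∈ A x* + B x* + C x*, provided C is single-valued. -/
import Mathlib

open RealInnerProductSpace

/-- A set-valued operator is monotone. -/
def MonotoneOp {H : Type*} [NormedAddCommGroup H] [InnerProductSpace ℝ H]
    (A : H → Set H) : Prop :=
  ∀ x y u v, u ∈ A x → v ∈ A y → 0 ≤ ⟪u - v, x - y⟫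

/-- A set-valued operator is maximally monotone. -/
def MaximalMonotoneOp {H : Type*} [NormedAddCommGroup H] [InnerProductSpace ℝ H]
    (A : H → Set H) : Prop :=
  MonotoneOp A ∧ ∀ x u, (∀ y v, v ∈ A y → 0 ≤ ⟪u - v, x - y⟫) → u ∈ A x

theorem stmt8 {H : Type*} [NormedAddCommGroup H] [InnerProductSpace ℝ H]
    [CompleteSpace H] (A B : H → Set H) (C : H → H) (γ : ℝ) (hγ : 0 < γ)
    (hA : MaximalMonotoneOp A) (hB : MaximalMonotoneOp B)
    (hC : MaximalMonotoneOp (fun x => {C x}))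
    (JA JB : H → H)
    (hJA : ∀ z : H, γ⁻¹ • (z - JA z) ∈ A (JA z))
    (hJB : ∀ z : H, γ⁻¹ • (z - JB z) ∈ B (JB z))
    (zstar : H)
    (hfix : zstar = zstar - JB zstar + JA ((2 : ℝ) • JB zstar - zstar - γ • C (JB zstar))) :
    ∃ a ∈ A (JB zstar), ∃ b ∈ B (JB zstar), a + b + C (JB zstar) = 0 := by
  set x := JB zstar
  set w := (2 : ℝ) • x - zstar - γ • C x with hw
  have hJAw : JA w = x := by
    have h : zstar - x + JA w = zstar := hfix.symm
    have h2 : JA w = zstar - (zstar - x) := by rw [eq_sub_iff_add_eq, add_comm]; exact h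
    rw [h2]; abel
  refine ⟨γ⁻¹ • (w - x), ?_, γ⁻¹ • (zstar - x), hJB zstar, ?_⟩
  · have := hJA w
    rwa [hJAw] at this
  · have hγ' : γ ≠ 0 := hγ.ne'
    rw [hw]
    match_scalars <;> norm_num [inv_mul_cancel₀ hγ']
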